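/- arXiv:1805.03662 — 6 statements merged into one kernel-verified Lean document; each statement's English description precedes it below -/
import Mathlib

section
/- With the qubitization setup (S a linear involution, P linear with P ψ = ψ and P (S ψ) = (e : ℂ) • ψ, |e| < 1, s = √(1 − e²), φ = (s : ℂ)⁻¹ • (S ψ − (e : ℂ) • ψ), and walk operator W = (2 • P − id) ∘ S), the two-dimensional span of ψ and φ is invariant under W, and in the basis (ψ, φ) the walk operator acts by the rotation matrix [[e, s], [−s, e]]; explicitly, W ψ = (e : ℂ) • ψ − (s : ℂ) • φ and W φ = (s : ℂ) • ψ + (e : ℂ) • φ. -/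
/-! Writing `S ψ = e • ψ + s • φ`, the walk operator `W = (2P - 1) S` sends `S ψ` to `ψ` and
`ψ` to `2e • ψ - S ψ = e • ψ - s • φ`; hence `s • W φ = W (S ψ) - e • W ψ = s² • ψ + e s • φ`
by `e² + s² = 1`, and cancelling `s ≠ 0` gives the second column of the rotation. -/

theorem Submodule.map_mem_span_pair {R M : Type*} [Semiring R] [AddCommMonoid M] [Module R M]
    {f : M →ₗ[R] M} {x y : M} (hx : f x ∈ span R {x, y}) (hy : f y ∈ span R {x, y}) :
    ∀ v ∈ span R {x, y}, f v ∈ span R {x, y} := fun _ hv =>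
  (span_le (p := (span R {x, y}).comap f)).mpr
    (Set.insert_subset hx (Set.singleton_subset_iff.mpr hy)) hv

section Walk

variable {V : Type*} [AddCommGroup V] [Module ℂ V] (S P : V →ₗ[ℂ] V)

theorem walk_apply (x : V) :
    ((2 • P - LinearMap.id) ∘ₗ S) x = (2 : ℂ) • P (S x) - S x := by
  simp [two_smul]

variable {S P}

theorem walk_apply_map_of_fixed (hS : ∀ x, S (S x) = x) {ψ : V} (hPψ : P ψ = ψ) :
    ((2 • P - LinearMap.id) ∘ₗ S) (S ψ) = ψ := by
  rw [walk_apply, hS, hPψ]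
  module

theorem walk_rotation {ψ φ : V} {c s : ℂ} (hs : s ≠ 0) (hcs : c ^ 2 + s ^ 2 = 1)
    (hS : ∀ x, S (S x) = x) (hPψ : P ψ = ψ) (hPSψ : P (S ψ) = c • ψ)
    (hSψ : S ψ = c • ψ + s • φ) :
    ((2 • P - LinearMap.id) ∘ₗ S) ψ = c • ψ - s • φ ∧
      ((2 • P - LinearMap.id) ∘ₗ S) φ = s • ψ + c • φ := by
  set W := (2 • P - LinearMap.id) ∘ₗ S
  have hWψ : W ψ = c • ψ - s • φ := by
    rw [walk_apply, hPSψ, hSψ]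
    module
  refine ⟨hWψ, smul_right_injective V hs ?_⟩
  calc s • W φ = W (S ψ) - c • W ψ := by rw [hSψ, map_add, map_smul, map_smul]; abel
    _ = (c ^ 2 + s ^ 2) • ψ - c • W ψ := by
      rw [walk_apply_map_of_fixed hS hPψ, hcs, one_smul]
    _ = s • (s • ψ + c • φ) := by rw [hWψ]; module

end Walk

theorem walk_rotation_on_invariant_subspace
    {V : Type*} [AddCommGroup V] [Module ℂ V]
    (S P : V →ₗ[ℂ] V)
    (hS : ∀ x : V, S (S x) = x)
    (ψ : V) (e : ℝ) (he : |e| < 1)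
    (hPψ : P ψ = ψ) (hPSψ : P (S ψ) = (e : ℂ) • ψ) :
    let s : ℝ := Real.sqrt (1 - e ^ 2)
    let φ : V := (s : ℂ)⁻¹ • (S ψ - (e : ℂ) • ψ)
    let W : V →ₗ[ℂ] V := (2 • P - LinearMap.id) ∘ₗ S
    (∀ v ∈ Submodule.span ℂ ({ψ, φ} : Set V), W v ∈ Submodule.span ℂ ({ψ, φ} : Set V)) ∧
    W ψ = (e : ℂ) • ψ - (s : ℂ) • φ ∧
    W φ = (s : ℂ) • ψ + (e : ℂ) • φ := by
  intro s φ W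
  have hpos : 0 < 1 - e ^ 2 := by nlinarith [sq_abs e, abs_nonneg e]
  have hs : (s : ℂ) ≠ 0 := Complex.ofReal_ne_zero.mpr (Real.sqrt_pos.mpr hpos).ne'
  have hes : (e : ℂ) ^ 2 + (s : ℂ) ^ 2 = 1 := by
    rw [← Complex.ofReal_pow, ← Complex.ofReal_pow, Real.sq_sqrt hpos.le]
    push_cast; ring
  have hSψ : S ψ = (e : ℂ) • ψ + (s : ℂ) • φ := by
    rw [smul_inv_smul₀ hs]; abel
  obtain ⟨hWψ, hWφ⟩ := walk_rotation hs hes hS hPψ hPSψ hSψ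
  refine ⟨Submodule.map_mem_span_pair ?_ ?_, hWψ, hWφ⟩
  · exact Submodule.mem_span_pair.mpr ⟨e, -s, by rw [hWψ, neg_smul, sub_eq_add_neg]⟩
  · exact Submodule.mem_span_pair.mpr ⟨s, e, by rw [hWφ]⟩
end

section
/- With the qubitization setup (S a linear involution, P linear with P ψ = ψ and P (S ψ) = (e : ℂ) • ψ, |e| < 1, s = √(1 − e²), φ = (s : ℂ)⁻¹ • (S ψ − (e : ℂ) • ψ), and walk operator W = (2 • P − id) ∘ S), the vectors ψ + i • φ and ψ − i • φ are eigenvectors of W with eigenvalues exp(i · arccos e) and exp(−i · arccos e) respectively: W (ψ + Complex.I • φ) = Complex.exp (Complex.I * Real.arccos e) • (ψ + Complex.I • φ) and W (ψ − Complex.I • φ) = Complex.exp (−Complex.I * Real.arccos e) • (ψ − Complex.I • φ). (This is the statement that the eigenphases of the walk operator are ± arccos(E_k/λ).) -/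
/-!
On the plane spanned by `ψ` and `φ` the involution `S` acts by the reflection matrix
`[[e, s], [s, -e]]` (its first column is the definition of `φ`, and `S² = 1` forces the second),
while `2 • P - id` fixes `ψ` and negates `φ`. Their product `W` is thus the rotation by `arccos e`
on this plane, with eigenvectors `ψ ± i φ` and eigenvalues `e ± i s = exp (± i arccos e)`.
-/

open Complex

section InvariantPlane

variable {V : Type*} [AddCommGroup V] [Module ℂ V]

theorem apply_eq_smul_sub_smul_of_involutive (S : V →ₗ[ℂ] V) (hS : ∀ x, S (S x) = x)
    {ψ φ : V} {c s : ℂ} (hs : s ≠ 0) (hcs : c ^ 2 + s ^ 2 = 1)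
    (hSψ : S ψ = c • ψ + s • φ) : S φ = s • ψ - c • φ := by
  have hsφ : s • φ = S ψ - c • ψ := by rw [hSψ]; abel
  apply smul_right_injective V hs
  calc s • S φ = ψ - c • S ψ := by rw [← map_smul, hsφ, map_sub, map_smul, hS]
    _ = s • (s • ψ - c • φ) := by
      rw [hSψ]; linear_combination (norm := module) (-hcs) • ψ

theorem comp_apply_add_smul_eq_smul (R S : V →ₗ[ℂ] V) {ψ φ : V} {c s z : ℂ} (hz : z ^ 2 = -1)
    (hRψ : R ψ = ψ) (hRφ : R φ = -φ)
    (hSψ : S ψ = c • ψ + s • φ) (hSφ : S φ = s • ψ - c • φ) :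
    (R ∘ₗ S) (ψ + z • φ) = (c + s * z) • (ψ + z • φ) := by
  simp only [LinearMap.comp_apply, map_add, map_smul, hSψ, hSφ, map_sub, hRψ, hRφ]
  linear_combination (norm := module) (-s) • hz • φ

end InvariantPlane

theorem exp_I_mul_arccos {x : ℝ} (hx₁ : -1 ≤ x) (hx₂ : x ≤ 1) :
    exp (I * Real.arccos x) = x + Real.sqrt (1 - x ^ 2) * I := by
  rw [mul_comm, exp_mul_I, ← ofReal_cos, ← ofReal_sin, Real.cos_arccos hx₁ hx₂, Real.sin_arccos]

theorem exp_neg_I_mul_arccos {x : ℝ} (hx₁ : -1 ≤ x) (hx₂ : x ≤ 1) :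
    exp (-I * Real.arccos x) = x + Real.sqrt (1 - x ^ 2) * -I := by
  rw [neg_mul, mul_comm, ← neg_mul, exp_mul_I, cos_neg, sin_neg, ← ofReal_cos, ← ofReal_sin,
    Real.cos_arccos hx₁ hx₂, Real.sin_arccos]
  ring

theorem walk_eigenvectors_eigenphases
    {V : Type*} [AddCommGroup V] [Module ℂ V]
    (S P : V →ₗ[ℂ] V)
    (hS : ∀ x : V, S (S x) = x)
    (ψ : V) (e : ℝ) (he : |e| < 1)
    (hPψ : P ψ = ψ) (hPSψ : P (S ψ) = (e : ℂ) • ψ) :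
    let s : ℝ := Real.sqrt (1 - e ^ 2)
    let φ : V := (s : ℂ)⁻¹ • (S ψ - (e : ℂ) • ψ)
    let W : V →ₗ[ℂ] V := (2 • P - LinearMap.id) ∘ₗ S
    W (ψ + Complex.I • φ) = Complex.exp (Complex.I * Real.arccos e) • (ψ + Complex.I • φ) ∧
    W (ψ - Complex.I • φ) = Complex.exp (-Complex.I * Real.arccos e) • (ψ - Complex.I • φ) := by
  intro s φ W
  obtain ⟨he₁, he₂⟩ := abs_lt.mp he
  have hs : (s : ℂ) ≠ 0 := ofReal_ne_zero.mpr (Real.sqrt_pos.mpr (by nlinarith)).ne'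
  have hes : (e : ℂ) ^ 2 + (s : ℂ) ^ 2 = 1 := by
    have hs_sq : s ^ 2 = 1 - e ^ 2 := Real.sq_sqrt (by nlinarith)
    exact_mod_cast (by linarith : e ^ 2 + s ^ 2 = 1)
  have hSψ : S ψ = (e : ℂ) • ψ + (s : ℂ) • φ := by
    rw [smul_inv_smul₀ hs]; abel
  have hSφ := apply_eq_smul_sub_smul_of_involutive S hS hs hes hSψ
  have hRψ : (2 • P - LinearMap.id : V →ₗ[ℂ] V) ψ = ψ := by simp [hPψ, two_smul]
  have hPφ : P φ = 0 := by simp [φ, hPψ, hPSψ]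
  have hRφ : (2 • P - LinearMap.id : V →ₗ[ℂ] V) φ = -φ := by simp [hPφ]
  refine ⟨?_, ?_⟩
  · rw [exp_I_mul_arccos he₁.le he₂.le]
    exact comp_apply_add_smul_eq_smul _ S I_sq hRψ hRφ hSψ hSφ
  · rw [exp_neg_I_mul_arccos he₁.le he₂.le, sub_eq_add_neg, ← neg_smul]
    exact comp_apply_add_smul_eq_smul _ S (by rw [neg_sq, I_sq]) hRψ hRφ hSψ hSφ
end

section
/- Let L and n be positive natural numbers, let w : Fin L → ℝ satisfy 0 ≤ w ℓ for all ℓ, set Λ := ∑ ℓ, w ℓ and assume 0 < Λ. Let Hm : Fin L → Matrix (Fin n) (Fin n) ℂ, define the amplitude vector v : Fin L → ℂ by v ℓ = (Real.sqrt (w ℓ / Λ) : ℂ), the selection matrix SELECT := ∑ ℓ, (Matrix.stdBasisMatrix ℓ ℓ (1 : ℂ)) ⊗ₖ Hm ℓ (a matrix indexed by Fin L × Fin n), and the isometry B := (Matrix.col Unit v) ⊗ₖ (1 : Matrix (Fin n) (Fin n) ℂ). Then Bᴴ * SELECT * B, after reindexing along the canonical equivalence Unit × Fin n ≃ Fin n,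 equals Λ⁻¹ • ∑ ℓ, (w ℓ : ℂ) • Hm ℓ. (This is Eq. (5): (⟨L| ⊗ 𝟙) SELECT (|L⟩ ⊗ 𝟙) = H/λ, the block encoding of H by the qubitization oracles.) -/
/-! By the mixed-product rule, conjugating `single ℓ ℓ 1 ⊗ₖ Hm ℓ` by `B = |v⟩ ⊗ₖ 1` gives the
`1 × 1` block `|v ℓ|² = w ℓ / Λ` tensored with `Hm ℓ`; summing over `ℓ` and identifying
`Unit × Fin n` with `Fin n` turns this into the weighted average `Λ⁻¹ • ∑ ℓ, w ℓ • Hm ℓ`. -/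

open Kronecker Matrix

namespace Matrix

variable {R ι m n l p : Type*}

theorem conjTranspose_kronecker_mul_kronecker_mul_kronecker [CommSemiring R] [StarRing R]
    [Fintype l] [Fintype p]
    (X : Matrix l ι R) (Y : Matrix p n R) (A : Matrix l l R) (M : Matrix p p R) :
    (X ⊗ₖ Y)ᴴ * (A ⊗ₖ M) * (X ⊗ₖ Y) = (Xᴴ * A * X) ⊗ₖ (Yᴴ * M * Y) := by
  rw [conjTranspose_kronecker, ← mul_kronecker_mul, ← mul_kronecker_mul]

theorem conjTranspose_replicateCol_mul_single_mul_replicateCol [Fintype ι] [DecidableEq ι]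
    [NonUnitalNonAssocSemiring R] [StarRing R] (v : ι → R) (i : ι) (c : R) :
    (replicateCol Unit v)ᴴ * single i i c * replicateCol Unit v =
      of fun _ _ => star (v i) * c * v i := by
  ext
  simp [conjTranspose_replicateCol, mul_apply, single_apply, ite_and]

theorem reindex_punitProd_kronecker [Mul R] (A : Matrix Unit Unit R) (M : Matrix m n R) :
    reindex (Equiv.punitProd m) (Equiv.punitProd n) (A ⊗ₖ M) = A () () • M := by
  ext
  simp

end Matrix

theorem block_encoding_of_select_general
    (L n : ℕ)
    (w : Fin L → ℝ) (hw : ∀ ℓ, 0 ≤ w ℓ)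
    (Λ : ℝ) (hΛ : 0 < Λ)
    (Hm : Fin L → Matrix (Fin n) (Fin n) ℂ) :
    let v : Fin L → ℂ := fun ℓ => (Real.sqrt (w ℓ / Λ) : ℂ)
    let SELECT : Matrix (Fin L × Fin n) (Fin L × Fin n) ℂ :=
      ∑ ℓ, (Matrix.single ℓ ℓ (1 : ℂ)) ⊗ₖ Hm ℓ
    let B : Matrix (Fin L × Fin n) (Unit × Fin n) ℂ :=
      (Matrix.replicateCol Unit v) ⊗ₖ (1 : Matrix (Fin n) (Fin n) ℂ)
    Matrix.reindex (Equiv.punitProd (Fin n)) (Equiv.punitProd (Fin n))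
        (Bᴴ * SELECT * B)
      = (Λ : ℂ)⁻¹ • ∑ ℓ, (w ℓ : ℂ) • Hm ℓ := by
  intro v SELECT B
  have amplitude_sq (ℓ : Fin L) : star (v ℓ) * v ℓ = (w ℓ : ℂ) / Λ := by
    rw [← Complex.ofReal_div, ← Real.mul_self_sqrt (div_nonneg (hw ℓ) hΛ.le)]
    simp [v]
  have sandwich : Bᴴ * SELECT * B = ∑ ℓ, (of fun _ _ => (w ℓ : ℂ) / Λ) ⊗ₖ Hm ℓ := by
    simp only [SELECT, B, Matrix.mul_sum, Matrix.sum_mul,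
      conjTranspose_kronecker_mul_kronecker_mul_kronecker,
      conjTranspose_replicateCol_mul_single_mul_replicateCol, amplitude_sq, conjTranspose_one,
      one_mul, mul_one]
  rw [sandwich, ← coe_reindexLinearEquiv ℂ ℂ, map_sum]
  simp only [coe_reindexLinearEquiv, reindex_punitProd_kronecker, of_apply, Finset.smul_sum,
    smul_smul, div_eq_inv_mul]

theorem block_encoding_of_select
    (L n : ℕ) (hL : 0 < L) (hn : 0 < n)
    (w : Fin L → ℝ) (hw : ∀ ℓ, 0 ≤ w ℓ)
    (Λ : ℝ) (hΛdef : Λ = ∑ ℓ, w ℓ) (hΛ : 0 < Λ)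
    (Hm : Fin L → Matrix (Fin n) (Fin n) ℂ) :
    let v : Fin L → ℂ := fun ℓ => (Real.sqrt (w ℓ / Λ) : ℂ)
    let SELECT : Matrix (Fin L × Fin n) (Fin L × Fin n) ℂ :=
      ∑ ℓ, (Matrix.single ℓ ℓ (1 : ℂ)) ⊗ₖ Hm ℓ
    let B : Matrix (Fin L × Fin n) (Unit × Fin n) ℂ :=
      (Matrix.replicateCol Unit v) ⊗ₖ (1 : Matrix (Fin n) (Fin n) ℂ)
    Matrix.reindex (Equiv.punitProd (Fin n)) (Equiv.punitProd (Fin n))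
        (Bᴴ * SELECT * B)
      = (Λ : ℂ)⁻¹ • ∑ ℓ, (w ℓ : ℂ) • Hm ℓ :=
  block_encoding_of_select_general L n w hw Λ hΛ Hm
end

section
/- Let n and K be positive natural numbers and let q : Fin n → ℕ satisfy ∑ i, q i = n * K. Then there exist functions alt : Fin n → Fin n and keep : Fin n → ℕ with keep i ≤ K for every i, such that for every ℓ : Fin n, keep ℓ + ∑_{k ∈ {k : alt k = ℓ}} (K − keep k) = q ℓ. (This is the correctness of the alias-sampling state-preparation scheme, Eq. (43): the precomputed alt_ℓ and keep_ℓ data reproduce the target discretized probabilities w̃_ℓ/λ = q_ℓ/(nK).) -/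
/-! If the masses `q` on `S` average `K`, some `ℓ` has `q ℓ ≤ K` and, unless `S = {ℓ}`, some
other `m` has `K ≤ q m`. Bucket `ℓ` keeps `q ℓ` and is topped up to `K` by its alias `m`, which
thereby loses `K - q ℓ`; the remaining masses on `S.erase ℓ` still average `K`, so induction on
`S` finishes. -/

open Finset

variable {α : Type*} [DecidableEq α]

/-- Bucket `i` of size `K` holds `keep i` units of the mass of `i` and `K - keep i` units of the
mass of its alias `alt i`. -/
structure IsAliasTable (K : ℕ) (S : Finset α) (q : α → ℕ) (alt : α → α) (keep : α → ℕ) :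
    Prop where
  mapsTo : Set.MapsTo alt S S
  keep_le : ∀ i ∈ S, keep i ≤ K
  keep_add_sum_eq : ∀ ℓ ∈ S, keep ℓ + ∑ k ∈ S with alt k = ℓ, (K - keep k) = q ℓ

namespace IsAliasTable

variable {K : ℕ} {S : Finset α} {q : α → ℕ} {alt : α → α} {keep : α → ℕ}

theorem empty (K : ℕ) (q : α → ℕ) : IsAliasTable K ∅ q id fun _ => 0 :=
  ⟨by simp, by simp, by simp⟩

theorem singleton (ℓ : α) (q : α → ℕ) : IsAliasTable (q ℓ) {ℓ} q id q :=
  ⟨by simp, by simp, by simp⟩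

theorem insert {ℓ m : α} (hℓ : ℓ ∉ S) (hm : m ∈ S) (hqℓ : q ℓ ≤ K) (hqm : K ≤ q ℓ + q m)
    (h : IsAliasTable K S (Function.update q m (q ℓ + q m - K)) alt keep) :
    IsAliasTable K (insert ℓ S) q (Function.update alt ℓ m) (Function.update keep ℓ (q ℓ)) := by
  have hne : ∀ k ∈ S, k ≠ ℓ := fun k hk hkℓ => hℓ (hkℓ ▸ hk)
  have hrest : ∀ ℓ', ∑ k ∈ S, (if Function.update alt ℓ m k = ℓ' then
      K - Function.update keep ℓ (q ℓ) k else 0) = ∑ k ∈ S with alt k = ℓ', (K - keep k) := by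
    intro ℓ'
    rw [sum_filter]
    refine sum_congr rfl fun k hk => ?_
    simp only [Function.update_of_ne (hne k hk)]
  refine ⟨?_, ?_, ?_⟩
  · intro i hi
    rcases mem_insert.1 hi with rfl | hi
    · simpa using mem_insert_of_mem hm
    · simpa [Function.update_of_ne (hne i hi)] using mem_insert_of_mem (h.mapsTo hi)
  · intro i hi
    rcases mem_insert.1 hi with rfl | hi
    · simpa using hqℓ
    · simpa [Function.update_of_ne (hne i hi)] using h.keep_le i hi
  · intro ℓ' hℓ'
    rw [sum_filter, sum_insert hℓ, hrest]
    simp only [Function.update_self]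
    rcases mem_insert.1 hℓ' with rfl | hℓ'
    · have hnone : ∑ k ∈ S with alt k = ℓ', (K - keep k) = 0 :=
        sum_eq_zero fun k hk => absurd (h.mapsTo (mem_filter.1 hk).1) ((mem_filter.1 hk).2 ▸ hℓ)
      simp [hnone, hne m hm]
    · have hrec := h.keep_add_sum_eq ℓ' hℓ'
      rw [Function.update_of_ne (hne ℓ' hℓ')]
      by_cases hmℓ' : m = ℓ'
      · subst hmℓ'
        simp only [Function.update_self, if_true] at hrec ⊢
        omega
      · rw [Function.update_of_ne (Ne.symm hmℓ')] at hrec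
        simp [hmℓ', hrec]

theorem exists_of_sum_eq (K : ℕ) (S : Finset α) (q : α → ℕ) (hq : ∑ i ∈ S, q i = #S * K) :
    ∃ alt keep, IsAliasTable K S q alt keep := by
  induction S using strongInduction generalizing q with
  | _ S ih =>
  rcases S.eq_empty_or_nonempty with rfl | hS
  · exact ⟨_, _, empty K q⟩
  obtain ⟨ℓ, hℓS, hqℓ⟩ : ∃ ℓ ∈ S, q ℓ ≤ K :=
    exists_le_of_sum_le hS (by rw [hq, sum_const, smul_eq_mul])
  have hmul : #S * K = #(S.erase ℓ) * K + K := by rw [← card_erase_add_one hℓS, add_one_mul]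
  have hsplit := sum_erase_add S q hℓS
  rcases (S.erase ℓ).eq_empty_or_nonempty with hS' | hS'
  · obtain rfl : S = {ℓ} := by rw [← insert_erase hℓS, hS']; rfl
    obtain rfl : K = q ℓ := by simpa using hq.symm
    exact ⟨_, _, singleton ℓ q⟩
  obtain ⟨m, hmS', hqm⟩ : ∃ m ∈ S.erase ℓ, K ≤ q m := by
    refine exists_le_of_sum_le hS' ?_
    rw [sum_const, smul_eq_mul]
    omega
  have hq' : ∑ i ∈ S.erase ℓ, Function.update q m (q ℓ + q m - K) i = #(S.erase ℓ) * K := by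
    have hsplit' := sum_erase_add _ q hmS'
    rw [sum_update_of_mem hmS', sdiff_singleton_eq_erase]
    omega
  obtain ⟨alt, keep, htable⟩ := ih _ (erase_ssubset hℓS) _ hq'
  rw [← insert_erase hℓS]
  exact ⟨_, _, htable.insert (notMem_erase ℓ S) hmS' hqℓ (by omega)⟩

end IsAliasTable

theorem alias_sampling_exists_general
    (n K : ℕ)
    (q : Fin n → ℕ) (hq : ∑ i, q i = n * K) :
    ∃ (alt : Fin n → Fin n) (keep : Fin n → ℕ),
      (∀ i, keep i ≤ K) ∧
      ∀ ℓ : Fin n,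
        keep ℓ + ∑ k ∈ Finset.univ.filter (fun k => alt k = ℓ), (K - keep k) = q ℓ := by
  obtain ⟨alt, keep, htable⟩ := IsAliasTable.exists_of_sum_eq K univ q (by simpa using hq)
  exact ⟨alt, keep, fun i => htable.keep_le i (mem_univ i),
    fun ℓ => htable.keep_add_sum_eq ℓ (mem_univ ℓ)⟩

theorem alias_sampling_exists
    (n K : ℕ) (hn : 0 < n) (hK : 0 < K)
    (q : Fin n → ℕ) (hq : ∑ i, q i = n * K) :
    ∃ (alt : Fin n → Fin n) (keep : Fin n → ℕ),
      (∀ i, keep i ≤ K) ∧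
      ∀ ℓ : Fin n,
        keep ℓ + ∑ k ∈ Finset.univ.filter (fun k => alt k = ℓ), (K - keep k) = q ℓ :=
  alias_sampling_exists_general n K q hq
end

section
/- Let A, B : Matrix (Fin n) (Fin n) ℂ be Hermitian matrices. Then, with respect to the ℓ²-operator norm, ‖exp(Complex.I • A) − exp(Complex.I • B)‖ ≤ ‖A − B‖. (This is the first inequality of Eq. (A2): the error in the eigenphase unitary e^{i arccos(H/λ)} is at most the error in the generator.) -/
/-! For skew-adjoint `a`, `b` interpolate from `exp b` to `exp a` by `f t = exp (t • a) * exp ((1 - t) • b)`.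
Its derivative `exp (t • a) * (a - b) * exp ((1 - t) • b)` is `a - b` sandwiched between two
unitaries, so in a C⋆-ring it has norm `‖a - b‖`, and the mean value inequality on `[0, 1]`
bounds `‖f 1 - f 0‖ = ‖exp a - exp b‖`. -/

open scoped Matrix.Norms.L2Operator
open NormedSpace

section ExpInterpolation

variable {𝔸 : Type*} [NormedRing 𝔸] [NormedAlgebra ℝ 𝔸] [CompleteSpace 𝔸]

theorem hasDerivAt_exp_smul_mul_exp_one_sub_smul (a b : 𝔸) (t : ℝ) :
    HasDerivAt (fun u : ℝ => exp (u • a) * exp ((1 - u) • b))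
      (exp (t • a) * (a - b) * exp ((1 - t) • b)) t := by
  have hb : HasDerivAt (fun u : ℝ => exp ((1 - u) • b)) (-(b * exp ((1 - t) • b))) t := by
    simpa using (hasDerivAt_exp_smul_const' b (1 - t)).comp_const_sub 1 t
  refine ((hasDerivAt_exp_smul_const a t).mul hb).congr_deriv ?_
  noncomm_ring

variable [StarRing 𝔸] [CStarRing 𝔸] [StarModule ℝ 𝔸]

theorem exp_smul_mem_unitary_of_mem_skewAdjoint {a : 𝔸} (ha : a ∈ skewAdjoint 𝔸) (t : ℝ) :
    exp (t • a) ∈ unitary 𝔸 :=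
  letI : NormedAlgebra ℚ 𝔸 := .restrictScalars ℚ ℝ 𝔸
  exp_mem_unitary_of_mem_skewAdjoint (skewAdjoint.smul_mem t ha)

theorem norm_exp_sub_exp_le_of_mem_skewAdjoint {a b : 𝔸} (ha : a ∈ skewAdjoint 𝔸)
    (hb : b ∈ skewAdjoint 𝔸) : ‖exp a - exp b‖ ≤ ‖a - b‖ := by
  have hderiv_norm (t : ℝ) : ‖exp (t • a) * (a - b) * exp ((1 - t) • b)‖ = ‖a - b‖ := by
    rw [CStarRing.norm_mul_mem_unitary _ (exp_smul_mem_unitary_of_mem_skewAdjoint hb _),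
      CStarRing.norm_mem_unitary_mul _ (exp_smul_mem_unitary_of_mem_skewAdjoint ha _)]
  simpa using norm_image_sub_le_of_norm_deriv_le_segment_01'
    (fun t _ => (hasDerivAt_exp_smul_mul_exp_one_sub_smul a b t).hasDerivWithinAt)
    (fun t _ => (hderiv_norm t).le)

end ExpInterpolation

theorem exp_hermitian_perturbation_bound
    {n : ℕ} (A B : Matrix (Fin n) (Fin n) ℂ)
    (hA : A.IsHermitian) (hB : B.IsHermitian) :
    ‖NormedSpace.exp (Complex.I • A) - NormedSpace.exp (Complex.I • B)‖ ≤ ‖A - B‖ := by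
  have hIA := hA.isSelfAdjoint.smul_mem_skewAdjoint Complex.conj_I
  have hIB := hB.isSelfAdjoint.smul_mem_skewAdjoint Complex.conj_I
  simpa [← smul_sub, norm_smul] using norm_exp_sub_exp_le_of_mem_skewAdjoint hIA hIB
end

section
/- Let λ, h, ε be real numbers and L a natural number with 0 < λ, 0 ≤ h < λ, 0 < ε, and 0 < L, and define δ := ε * λ * (1 − h²/λ²) / ((1 + ε²) * L). Then h + L * δ < λ and (L * δ / λ) / Real.sqrt (1 − ((h + L * δ)/λ)²) ≤ ε. (This is the content of Eqs. (A8)–(A9): the choice δ = ελ(1 − ‖H‖²/λ²)/((1+ε²)L) solves the inequality ε ≥ (Lδ/λ)[1 − ((‖H‖+Lδ)/λ)²]^{−1/2}, so coefficient errors of size δ keep the eigenphase error below ε.) -/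
/-!
Normalise by `lam`: with `t = h / lam` and `s = 1 - t ^ 2`, the choice of `δ` makes the relative
error `a = L * δ / lam` equal to `ε * s / (1 + ε ^ 2)`. The first claim reduces to
`ε * (1 + t) < 1 + ε ^ 2`, and the second to `a ^ 2 ≤ ε ^ 2 * (1 - (t + a) ^ 2)`, whose slack is
the square `ε ^ 2 * s * (ε - t) ^ 2 / (1 + ε ^ 2)`.
-/

noncomputable def relErrorBudget (ε t : ℝ) : ℝ := ε * (1 - t ^ 2) / (1 + ε ^ 2)

section RelErrorBudget

variable {ε t : ℝ}

lemma add_relErrorBudget_lt_one (hε : 0 < ε) (ht : t < 1) : t + relErrorBudget ε t < 1 := by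
  have hc : 0 < 1 + ε ^ 2 := by positivity
  have hgap : 0 < 1 + ε ^ 2 - ε * (1 + t) := by nlinarith [sq_nonneg (1 - ε)]
  rw [relErrorBudget, ← sub_pos, show 1 - (t + ε * (1 - t ^ 2) / (1 + ε ^ 2))
    = (1 - t) * (1 + ε ^ 2 - ε * (1 + t)) / (1 + ε ^ 2) by field_simp; ring]
  exact div_pos (mul_pos (sub_pos.mpr ht) hgap) hc

lemma sq_mul_one_sub_sq_add_relErrorBudget_sub_sq (ε t : ℝ) :
    ε ^ 2 * (1 - (t + relErrorBudget ε t) ^ 2) - relErrorBudget ε t ^ 2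
      = ε ^ 2 * (1 - t ^ 2) * (ε - t) ^ 2 / (1 + ε ^ 2) := by
  have hc : 1 + ε ^ 2 ≠ 0 := by positivity
  rw [relErrorBudget]
  field_simp
  ring

lemma relErrorBudget_div_sqrt_le (hε : 0 < ε) (ht : t ^ 2 ≤ 1) :
    relErrorBudget ε t / √(1 - (t + relErrorBudget ε t) ^ 2) ≤ ε := by
  have hsq : relErrorBudget ε t ^ 2 ≤ ε ^ 2 * (1 - (t + relErrorBudget ε t) ^ 2) := by
    have hs : 0 ≤ 1 - t ^ 2 := sub_nonneg.mpr ht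
    have hslack : 0 ≤ ε ^ 2 * (1 - t ^ 2) * (ε - t) ^ 2 / (1 + ε ^ 2) := by positivity
    linarith [sq_mul_one_sub_sq_add_relErrorBudget_sub_sq ε t]
  refine div_le_of_le_mul₀ (Real.sqrt_nonneg _) hε.le ?_
  calc relErrorBudget ε t ≤ |relErrorBudget ε t| := le_abs_self _
    _ ≤ √(ε ^ 2 * (1 - (t + relErrorBudget ε t) ^ 2)) := Real.abs_le_sqrt hsq
    _ = ε * √(1 - (t + relErrorBudget ε t) ^ 2) := by
      rw [Real.sqrt_mul (sq_nonneg ε), Real.sqrt_sq hε.le]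

end RelErrorBudget

theorem delta_choice_controls_phase_error
    (lam h ε : ℝ) (L : ℕ)
    (hlam : 0 < lam) (hh0 : 0 ≤ h) (hh : h < lam) (hε : 0 < ε) (hL : 0 < L) :
    let δ : ℝ := ε * lam * (1 - h ^ 2 / lam ^ 2) / ((1 + ε ^ 2) * L)
    h + L * δ < lam ∧
    (L * δ / lam) / Real.sqrt (1 - ((h + L * δ) / lam) ^ 2) ≤ ε := by
  intro δ
  set t := h / lam
  have hLδ : L * δ = lam * relErrorBudget ε t := by
    have : (L : ℝ) ≠ 0 := by positivity
    simp only [δ, t, relErrorBudget, div_pow]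
    field_simp
  have hnorm : (h + L * δ) / lam = t + relErrorBudget ε t := by
    rw [hLδ, add_div, mul_div_cancel_left₀ _ hlam.ne']
  have ht : t < 1 := (div_lt_one hlam).mpr hh
  have ht0 : 0 ≤ t := div_nonneg hh0 hlam.le
  refine ⟨?_, ?_⟩
  · have hlt := add_relErrorBudget_lt_one hε ht
    rwa [← hnorm, div_lt_one hlam] at hlt
  · rw [hnorm, hLδ, mul_div_cancel_left₀ _ hlam.ne']
    exact relErrorBudget_div_sqrt_le hε (by nlinarith)
end
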